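/- arXiv:2106.00290 — 9 statements merged into one kernel-verified Lean document; each statement's English description precedes it below -/
import Mathlib

section
/- Let G be a group generated by a subset S, and let S^G denote the union of conjugacy classes of elements of S. Then every element of S^G can be written as a left-associated quandle product s * s_1^{ε_1} * ... * s_k^{ε_k} of elements of S under the conjugation operation x * y = y x y^{-1} (with inverses x *^{-1} y = y^{-1} x y). In other words, the Dehn quandle D(S^G) is generated as a quandle by S. -/
/-- The set of all conjugates of elements of `S` in `G`. -/
def conjSet (G : Type*) [Group G] (S : Set G) : Set G :=
  {x | ∃ s ∈ S, ∃ g : G, x = g * s * g⁻¹}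

theorem conjSet.conj_mem {G : Type*} [Group G] {S : Set G} {x : G}
    (hx : x ∈ conjSet G S) (g : G) : g * x * g⁻¹ ∈ conjSet G S := by
  obtain ⟨s, hs, h, rfl⟩ := hx
  exact ⟨s, hs, g * h, by group⟩

/-- The Dehn quandle operation `x * y = y x y⁻¹` on the set of conjugates of `S`. -/
def dehnOp {G : Type*} [Group G] {S : Set G} (x y : conjSet G S) : conjSet G S :=
  ⟨(y : G) * (x : G) * (y : G)⁻¹, conjSet.conj_mem x.2 (y : G)⟩

/-! The elements `g` with `g T g⁻¹ = T` form a subgroup, the set normalizer of `T`. If `T`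
contains `S` and is closed under the quandle operation and its inverse, this subgroup
contains `S`, hence is all of `G`; so `T` contains every conjugate of every `s ∈ S`. -/

theorem Subgroup.mem_normalizer_of_conj_mem {G : Type*} [Group G] {T : Set G} {y : G}
    (h : ∀ x ∈ T, y * x * y⁻¹ ∈ T ∧ y⁻¹ * x * y ∈ T) : y ∈ Subgroup.normalizer T := by
  refine Subgroup.mem_set_normalizer_iff.2 fun x ↦ ⟨fun hx ↦ (h x hx).1, fun hx ↦ ?_⟩
  simpa [mul_assoc] using (h _ hx).2

/-- If `G` is generated by `S`, then the Dehn quandle `D(S^G)` is generated as a quandle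
by `S`: every subset containing `S` and closed under the quandle operation and its
inverse contains all of `conjSet G S`. -/
theorem dehn_quandle_generated_by (G : Type*) [Group G] (S : Set G)
    (hS : Subgroup.closure S = ⊤) :
    ∀ T : Set G, S ⊆ T →
      (∀ x ∈ T, ∀ y ∈ T, y * x * y⁻¹ ∈ T ∧ y⁻¹ * x * y ∈ T) →
      conjSet G S ⊆ T := by
  rintro T hST hT _ ⟨s, hs, g, rfl⟩
  have hS_le : Subgroup.closure S ≤ Subgroup.normalizer T :=
    (Subgroup.closure_le _).2 fun y hy ↦
      Subgroup.mem_normalizer_of_conj_mem fun x hx ↦ hT x hx y (hST hy)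
  have hg : g ∈ Subgroup.normalizer T := hS_le (hS ▸ Subgroup.mem_top g)
  exact (Subgroup.mem_set_normalizer_iff.1 hg s).1 (hST hs)
end

section
/- Let G be a group generated by S, and let Φ : Env(D(S^G)) → G be the group homomorphism determined by Φ(e_x) = x for x ∈ D(S^G). Then Φ is a well-defined surjective group homomorphism and its kernel is contained in the center of Env(D(S^G)); that is, Env(D(S^G)) is a central extension of G. -/
/-- Relations defining the enveloping group of the Dehn quandle `D(S^G)`:
`e_{x*y} = e_y e_x e_y⁻¹`. -/
def dehnEnvRels (G : Type*) [Group G] (S : Set G) : Set (FreeGroup (conjSet G S)) :=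
  {r | ∃ x y : conjSet G S,
    r = FreeGroup.of (dehnOp x y) *
      (FreeGroup.of y * FreeGroup.of x * (FreeGroup.of y)⁻¹)⁻¹}

/-- The enveloping group of the Dehn quandle `D(S^G)`. -/
abbrev DehnEnv (G : Type*) [Group G] (S : Set G) : Type _ :=
  PresentedGroup (dehnEnvRels G S)

/-
Conjugation in `Env(D(S^G))` lifts conjugation in `G`: the defining relation
`e_y e_x e_y⁻¹ = e_{y x y⁻¹}` says that conjugating a generator `e_x` by `e_y` gives the generator
of `Φ(e_y) x Φ(e_y)⁻¹`, and this propagates to conjugation by an arbitrary `n`, which sends `e_x`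
to the generator of `Φ(n) x Φ(n)⁻¹`. An element of the kernel therefore commutes with every
generator, hence is central.
-/

theorem PresentedGroup.mem_center_iff {α : Type*} {rels : Set (FreeGroup α)}
    {n : PresentedGroup rels} : n ∈ Subgroup.center (PresentedGroup rels) ↔
      ∀ a : α, PresentedGroup.of a * n = n * PresentedGroup.of a := by
  rw [← Subgroup.centralizer_univ, ← Subgroup.coe_top, ← PresentedGroup.closure_range_of,
    Subgroup.centralizer_closure, Subgroup.mem_centralizer_iff, Set.forall_mem_range]

namespace conjSet

variable {G : Type*} [Group G] {S : Set G}

instance : MulAction G (conjSet G S) where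
  smul g x := ⟨g * x * g⁻¹, conj_mem x.2 g⟩
  one_smul x := Subtype.ext (show 1 * (x : G) * 1⁻¹ = x by group)
  mul_smul g h x := Subtype.ext (show g * h * x * (g * h)⁻¹ = g * (h * x * h⁻¹) * g⁻¹ by group)

theorem dehnOp_eq_smul (x y : conjSet G S) : dehnOp x y = (y : G) • x := rfl

end conjSet

namespace DehnEnv

variable {G : Type*} [Group G] {S : Set G}

theorem of_dehnOp (x y : conjSet G S) :
    (PresentedGroup.of (dehnOp x y) : DehnEnv G S) =
      PresentedGroup.of y * PresentedGroup.of x * (PresentedGroup.of y)⁻¹ := by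
  have h := PresentedGroup.mk_eq_mk_of_mul_inv_mem (rels := dehnEnvRels G S) ⟨x, y, rfl⟩
  simp only [map_mul, map_inv] at h
  exact h

theorem lift_val_eq_one_of_mem_rels :
    ∀ r ∈ dehnEnvRels G S, FreeGroup.lift (Subtype.val : conjSet G S → G) r = 1 := by
  rintro r ⟨x, y, rfl⟩
  simp [dehnOp]

variable (G S) in
def toGroup : DehnEnv G S →* G :=
  PresentedGroup.toGroup lift_val_eq_one_of_mem_rels

@[simp]
theorem toGroup_of (x : conjSet G S) : toGroup G S (PresentedGroup.of x) = x :=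
  PresentedGroup.toGroup.of _

theorem toGroup_surjective (hS : Subgroup.closure S = ⊤) :
    Function.Surjective (toGroup G S) := by
  rw [← MonoidHom.range_eq_top, eq_top_iff, ← hS, Subgroup.closure_le]
  exact fun s hs => ⟨PresentedGroup.of ⟨s, s, hs, 1, by group⟩, toGroup_of _⟩

theorem conj_of (n : DehnEnv G S) (x : conjSet G S) :
    n * PresentedGroup.of x * n⁻¹ = PresentedGroup.of (toGroup G S n • x) := by
  have hn : n ∈ Subgroup.closure (Set.range PresentedGroup.of) := by
    rw [PresentedGroup.closure_range_of]; trivial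
  induction hn using Subgroup.closure_induction generalizing x with
  | mem _ hy =>
    obtain ⟨y, rfl⟩ := hy
    rw [← of_dehnOp, toGroup_of, conjSet.dehnOp_eq_smul]
  | one => simp
  | mul a b _ _ iha ihb =>
    rw [map_mul, mul_smul, ← iha, ← ihb]
    group
  | inv a _ iha =>
    have h := iha ((toGroup G S a)⁻¹ • x)
    rw [smul_inv_smul] at h
    rw [← h, map_inv]
    group

theorem ker_toGroup_le_center : (toGroup G S).ker ≤ Subgroup.center (DehnEnv G S) := by
  intro n hn
  rw [PresentedGroup.mem_center_iff]
  intro x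
  have h := conj_of n x
  rw [(toGroup G S).mem_ker.mp hn, one_smul] at h
  exact eq_mul_inv_iff_mul_eq.mp h.symm

end DehnEnv

/-- For `G` generated by `S`, the map `Φ : Env(D(S^G)) → G`, `e_x ↦ x`, is a well-defined
surjective group homomorphism with central kernel. -/
theorem envelGroup_central_extension (G : Type*) [Group G] (S : Set G)
    (hS : Subgroup.closure S = ⊤) :
    ∃ Φ : DehnEnv G S →* G,
      (∀ x : conjSet G S, Φ (PresentedGroup.of x) = (x : G)) ∧
      Function.Surjective Φ ∧
      Φ.ker ≤ Subgroup.center (DehnEnv G S) :=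
  ⟨DehnEnv.toGroup G S, DehnEnv.toGroup_of, DehnEnv.toGroup_surjective hS,
    DehnEnv.ker_toGroup_le_center⟩
end

section
/- Let G be a group generated by S such that the abelianization of G has a nontrivial torsion element. Then the central extension 1 → ker(Φ) → Env(D(S^G)) → G → 1 does not split; i.e., there is no group homomorphism section of Φ. -/
/-!
Sending each generator `e_x` of `Env(D(S^G))` to the conjugacy class of `x` in the free abelian
group on `ConjClasses G` respects the defining relations, and composing with the map
`[g] ↦ g` to `G_ab` recovers `Φ` followed by abelianization. A section `s` of `Φ` would therefore
make `G → G_ab` factor through a torsion-free abelian group, so that `G_ab` embeds in it.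
-/

instance FreeAbelianGroup.instIsAddTorsionFree (α : Type*) :
    IsAddTorsionFree (FreeAbelianGroup α) :=
  (FreeAbelianGroup.equivFinsupp α).injective.isAddTorsionFree
    (FreeAbelianGroup.equivFinsupp α).toAddMonoidHom

theorem Abelianization.isMulTorsionFree_of_comp_eq_of {G A : Type*} [Group G] [CommGroup A]
    [IsMulTorsionFree A] (f : G →* A) (θ : A →* Abelianization G)
    (h : θ.comp f = Abelianization.of) : IsMulTorsionFree (Abelianization G) := by
  have hinv : θ.comp (Abelianization.lift f) = MonoidHom.id _ :=
    Abelianization.hom_ext _ _ <| MonoidHom.ext fun g => by simpa using DFunLike.congr_fun h g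
  exact Function.Injective.isMulTorsionFree (Abelianization.lift f)
    (Function.LeftInverse.injective (g := θ) (DFunLike.congr_fun hinv))

namespace ConjClasses

variable {G : Type*} [Group G]

def toAbelianization : ConjClasses G → Abelianization G :=
  ConjClasses.mkEquiv.symm ∘ ConjClasses.map Abelianization.of

@[simp]
theorem toAbelianization_mk (g : G) :
    toAbelianization (ConjClasses.mk g) = Abelianization.of g :=
  ConjClasses.mkEquiv.symm_apply_apply _

end ConjClasses

namespace DehnEnv

variable {G : Type*} [Group G] {S : Set G}

theorem isConj_dehnOp (x y : conjSet G S) : IsConj (x : G) (dehnOp x y : G) :=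
  isConj_iff.mpr ⟨y, rfl⟩

variable (G S) in
def toFreeAbelianGroup : DehnEnv G S →* Multiplicative (FreeAbelianGroup (ConjClasses G)) :=
  PresentedGroup.toGroup
    (f := fun x => .ofAdd (.of (ConjClasses.mk (x : G)))) <| by
      rintro r ⟨x, y, rfl⟩
      simp only [map_mul, map_inv, FreeGroup.lift_apply_of, mul_inv_cancel_comm,
        ConjClasses.mk_eq_mk_iff_isConj.mpr (isConj_dehnOp x y).symm, mul_inv_cancel]

theorem toFreeAbelianGroup_of (x : conjSet G S) :
    toFreeAbelianGroup G S (PresentedGroup.of x) = .ofAdd (.of (ConjClasses.mk (x : G))) :=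
  PresentedGroup.toGroup.of _

theorem toAbelianization_comp_toFreeAbelianGroup (Φ : DehnEnv G S →* G)
    (hΦ : ∀ x : conjSet G S, Φ (PresentedGroup.of x) = (x : G)) :
    (FreeAbelianGroup.lift (.ofMul ∘ ConjClasses.toAbelianization)).toMultiplicativeLeft.comp
      (toFreeAbelianGroup G S) = Abelianization.of.comp Φ := by
  refine PresentedGroup.ext fun x => ?_
  simp [toFreeAbelianGroup_of, hΦ]

end DehnEnv

theorem envelGroup_extension_not_split_general (G : Type*) [Group G] (S : Set G)
    (htor : ∃ a : Abelianization G, a ≠ 1 ∧ ∃ n : ℕ, 0 < n ∧ a ^ n = 1)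
    (Φ : DehnEnv G S →* G)
    (hΦ : ∀ x : conjSet G S, Φ (PresentedGroup.of x) = (x : G)) :
    ¬ ∃ s : G →* DehnEnv G S, Φ.comp s = MonoidHom.id G := by
  rintro ⟨s, hs⟩
  obtain ⟨a, ha, n, hn, han⟩ := htor
  have : IsMulTorsionFree (Abelianization G) :=
    Abelianization.isMulTorsionFree_of_comp_eq_of ((DehnEnv.toFreeAbelianGroup G S).comp s) _ <| by
      rw [← MonoidHom.comp_assoc, DehnEnv.toAbelianization_comp_toFreeAbelianGroup Φ hΦ,
        MonoidHom.comp_assoc, hs, MonoidHom.comp_id]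
  exact ha ((pow_eq_one_iff_left hn.ne').mp han)

/-- If the abelianization of `G` has a nontrivial torsion element, then the central
extension `1 → ker Φ → Env(D(S^G)) → G → 1` does not split. -/
theorem envelGroup_extension_not_split (G : Type*) [Group G] (S : Set G)
    (hS : Subgroup.closure S = ⊤)
    (htor : ∃ a : Abelianization G, a ≠ 1 ∧ ∃ n : ℕ, 0 < n ∧ a ^ n = 1)
    (Φ : DehnEnv G S →* G)
    (hΦ : ∀ x : conjSet G S, Φ (PresentedGroup.of x) = (x : G)) :
    ¬ ∃ s : G →* DehnEnv G S, Φ.comp s = MonoidHom.id G :=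
  envelGroup_extension_not_split_general G S htor Φ hΦ
end

section
/- Every subquandle of the conjugation quandle Conj(G) of a group G is isomorphic, as a quandle, to a Dehn quandle; specifically, if Q is a subquandle of Conj(G) and ⟨Q⟩ is the subgroup of G generated by the underlying set of Q, then Q is isomorphic to the Dehn quandle D(Q^{⟨Q⟩}). -/
/-!
Since `Q` is closed under conjugation by its elements and their inverses, `Q` lies in its own
normalizer, hence so does the subgroup it generates. Thus conjugating `Q` by `⟨Q⟩` produces
nothing new, the Dehn quandle `D(Q^{⟨Q⟩})` has `Q` itself as underlying set, and the identity
of `Q` is the required isomorphism.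
-/

namespace Subgroup

variable {G : Type*} [Group G] {S : Set G}

theorem subset_normalizer_of_conj_mem
    (hS : ∀ x ∈ S, ∀ y ∈ S, y * x * y⁻¹ ∈ S ∧ y⁻¹ * x * y ∈ S) : S ⊆ normalizer S :=
  fun y hy x => ⟨fun hx => (hS x hx y hy).1,
    fun hx => by simpa [mul_assoc] using (hS _ hx y hy).2⟩

theorem closure_le_normalizer_of_conj_mem
    (hS : ∀ x ∈ S, ∀ y ∈ S, y * x * y⁻¹ ∈ S ∧ y⁻¹ * x * y ∈ S) : closure S ≤ normalizer S :=
  (closure_le _).2 (subset_normalizer_of_conj_mem hS)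

theorem closure_conj_eq_self_of_conj_mem
    (hS : ∀ x ∈ S, ∀ y ∈ S, y * x * y⁻¹ ∈ S ∧ y⁻¹ * x * y ∈ S) :
    {x : G | ∃ a ∈ S, ∃ g ∈ closure S, x = g * a * g⁻¹} = S := by
  ext x
  constructor
  · rintro ⟨a, ha, g, hg, rfl⟩
    exact (closure_le_normalizer_of_conj_mem hS hg a).1 ha
  · intro hx
    exact ⟨x, hx, 1, one_mem _, by group⟩

end Subgroup

/-- Every subquandle `Q` of `Conj G` is isomorphic, as a quandle, to the Dehn quandle
`D(Q^{⟨Q⟩})` of the subgroup generated by `Q` with respect to `Q`. -/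
theorem subquandle_isomorphic_dehn_quandle (G : Type*) [Group G] (Q : Set G)
    (hQ : ∀ x ∈ Q, ∀ y ∈ Q, y * x * y⁻¹ ∈ Q ∧ y⁻¹ * x * y ∈ Q) :
    ∃ f : Q → {x : G | ∃ a ∈ Q, ∃ g ∈ Subgroup.closure Q, x = g * a * g⁻¹},
      Function.Bijective f ∧
      ∀ x y : Q,
        (f ⟨(y : G) * (x : G) * (y : G)⁻¹, (hQ x.1 x.2 y.1 y.2).1⟩ : G) =
          (f y : G) * (f x : G) * (f y : G)⁻¹ :=
  let e := Equiv.setCongr (Subgroup.closure_conj_eq_self_of_conj_mem hQ).symm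
  ⟨e, e.bijective, fun _ _ => rfl⟩
end

section
/- Let G be a group and let A ⊆ G contain two distinct elements x, y satisfying the braid relation xyx = yxy. Then the Dehn quandle D(A^G) admits no right order and no left order. (Right order: a strict linear order < with a < b implying a*c < b*c for all c; left order: a < b implying c*a < c*b for all c.) -/
section RightInvariantOrder

variable {α : Type*} (op : α → α → α) (r : α → α → Prop)

theorem not_rel_of_braid_of_rightInvariant [IsStrictOrder α r]
    (hr : ∀ a b c, r a b → r (op a c) (op b c)) {a b : α}
    (hb : op b b = b) (hab : op (op a b) a = b) (hba : op (op b a) b = a) : ¬ r a b := by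
  intro h
  have h₁ : r (op a b) b := by simpa only [hb] using hr a b b h
  have h₂ : r b (op b a) := by simpa only [hab] using hr _ _ a h₁
  have h₃ : r b a := by simpa only [hb, hba] using hr _ _ b h₂
  exact irrefl a (_root_.trans h h₃)

theorem eq_of_braid_of_rightInvariant [IsStrictTotalOrder α r]
    (hr : ∀ a b c, r a b → r (op a c) (op b c)) {a b : α} (ha : op a a = a) (hb : op b b = b)
    (hab : op (op a b) a = b) (hba : op (op b a) b = a) : a = b := by
  rcases trichotomous_of r a b with h | h | h
  · exact absurd h (not_rel_of_braid_of_rightInvariant op r hr hb hab hba)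
  · exact h
  · exact absurd h (not_rel_of_braid_of_rightInvariant op r hr ha hba hab)

end RightInvariantOrder

namespace conjSet

variable {G : Type*} [Group G] {S : Set G}

theorem subset_conjSet : S ⊆ conjSet G S :=
  fun s hs => ⟨s, hs, 1, by group⟩

theorem dehnOp_self (a : conjSet G S) : dehnOp a a = a :=
  Subtype.ext (mul_inv_cancel_right _ _)

theorem dehnOp_flexible (a b : conjSet G S) :
    dehnOp a (dehnOp b a) = dehnOp (dehnOp a b) a :=
  Subtype.ext <| by simp only [dehnOp]; group

variable {a b : conjSet G S} (h : (a : G) * b * a = b * a * b)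
include h

theorem dehnOp_dehnOp_left_of_braid : dehnOp (dehnOp a b) a = b :=
  Subtype.ext <| calc (a : G) * (b * a * (b : G)⁻¹) * (a : G)⁻¹
      _ = a * b * a * (b : G)⁻¹ * (a : G)⁻¹ := by group
      _ = b := by rw [h]; group

theorem dehnOp_dehnOp_right_of_braid : dehnOp a (dehnOp b a) = b :=
  (dehnOp_flexible a b).trans (dehnOp_dehnOp_left_of_braid h)

end conjSet

/-- If `A ⊆ G` contains distinct elements `x, y` with `xyx = yxy`, then the Dehn quandle
`D(A^G)` admits no right order and no left order. -/
theorem dehn_quandle_not_orderable (G : Type*) [Group G] (A : Set G) (x y : G)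
    (hx : x ∈ A) (hy : y ∈ A) (hne : x ≠ y) (hbraid : x * y * x = y * x * y) :
    (¬ ∃ r : conjSet G A → conjSet G A → Prop, IsStrictTotalOrder (conjSet G A) r ∧
        ∀ a b c : conjSet G A, r a b → r (dehnOp a c) (dehnOp b c)) ∧
    (¬ ∃ r : conjSet G A → conjSet G A → Prop, IsStrictTotalOrder (conjSet G A) r ∧
        ∀ a b c : conjSet G A, r a b → r (dehnOp c a) (dehnOp c b)) := by
  let X : conjSet G A := ⟨x, conjSet.subset_conjSet hx⟩
  let Y : conjSet G A := ⟨y, conjSet.subset_conjSet hy⟩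
  have hXY : X ≠ Y := fun h => hne (congrArg Subtype.val h)
  have hXYX : (X : G) * Y * X = Y * X * Y := hbraid
  constructor
  · rintro ⟨r, _, hr⟩
    exact hXY <| eq_of_braid_of_rightInvariant dehnOp r hr
      (conjSet.dehnOp_self X) (conjSet.dehnOp_self Y)
      (conjSet.dehnOp_dehnOp_left_of_braid hXYX)
      (conjSet.dehnOp_dehnOp_left_of_braid hXYX.symm)
  · rintro ⟨r, _, hr⟩
    exact hXY <| eq_of_braid_of_rightInvariant (flip dehnOp) r hr
      (conjSet.dehnOp_self X) (conjSet.dehnOp_self Y)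
      (conjSet.dehnOp_dehnOp_right_of_braid hXYX)
      (conjSet.dehnOp_dehnOp_right_of_braid hXYX.symm)
end

section
/- Let G be a group containing two distinct elements x and y with xyx = yxy. Then G is not bi-orderable; i.e., G admits no strict linear order invariant under both left and right multiplication. -/
/-!
Suppose `<` is a bi-invariant strict order and `a < b` with `aba = bab`. Multiplying by `ba` on the
left gives `baa < bab = aba`, and cancelling `a` on the right yields `ba < ab`; multiplying by `ab`
on the right gives `aab < bab = aba`, and cancelling `a` on the left yields `ab < ba`. Hence neither
`x < y` nor `y < x` can hold, and `x ≠ y` rules out the remaining case of trichotomy.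
-/

section BiInvariant

variable {G : Type*} [Group G] {r : G → G → Prop}

theorem rel_swap_mul_of_braid (hl : ∀ a b c : G, r a b → r (c * a) (c * b))
    (hr : ∀ a b c : G, r a b → r (a * c) (b * c)) {a b : G}
    (hbraid : a * b * a = b * a * b) (hab : r a b) : r (b * a) (a * b) := by
  have h : r (b * a * a) (a * b * a) := by
    simpa only [← mul_assoc, ← hbraid] using hl a b (b * a) hab
  simpa only [mul_inv_cancel_right] using hr _ _ a⁻¹ h

theorem rel_mul_swap_of_braid (hl : ∀ a b c : G, r a b → r (c * a) (c * b))
    (hr : ∀ a b c : G, r a b → r (a * c) (b * c)) {a b : G}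
    (hbraid : a * b * a = b * a * b) (hab : r a b) : r (a * b) (b * a) := by
  have h : r (a * (a * b)) (a * (b * a)) := by
    simpa only [← mul_assoc, ← hbraid] using hr a b (a * b) hab
  simpa only [inv_mul_cancel_left] using hl _ _ a⁻¹ h

theorem not_rel_of_braid [Std.Asymm r] (hl : ∀ a b c : G, r a b → r (c * a) (c * b))
    (hr : ∀ a b c : G, r a b → r (a * c) (b * c)) {a b : G}
    (hbraid : a * b * a = b * a * b) : ¬ r a b := fun hab =>
  asymm (rel_mul_swap_of_braid hl hr hbraid hab) (rel_swap_mul_of_braid hl hr hbraid hab)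

end BiInvariant

/-- A group containing two distinct elements `x, y` with `xyx = yxy` is not bi-orderable. -/
theorem not_biorderable_of_braid_relation (G : Type*) [Group G] (x y : G)
    (hne : x ≠ y) (hbraid : x * y * x = y * x * y) :
    ¬ ∃ r : G → G → Prop, IsStrictTotalOrder G r ∧
        (∀ a b c : G, r a b → r (c * a) (c * b)) ∧
        (∀ a b c : G, r a b → r (a * c) (b * c)) := by
  rintro ⟨r, _, hl, hr⟩
  rcases trichotomous_of r x y with hxy | rfl | hyx
  · exact not_rel_of_braid hl hr hbraid hxy
  · exact hne rfl
  · exact not_rel_of_braid hl hr hbraid.symm hyx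
end

section
/- Let G be a group and φ an automorphism of G whose only fixed point is the identity. Then the map x ↦ S_x from the generalized Alexander quandle Alex(G, φ) to the conjugation quandle of its inner automorphism group, sending x to the inner automorphism S_x(z) = φ(z x^{-1}) x, is injective. Consequently Alex(G, φ) embeds into the conjugation quandle of a group. -/
/-!
Evaluating at `1` gives `S_x 1 = φ(x⁻¹) x`, and `φ(x⁻¹) x = φ(y⁻¹) y` says exactly that `y x⁻¹`
is fixed by `φ`; so a fixed-point free `φ` makes `x ↦ S_x` injective. Since `Alex(G, φ)` is a
quandle, `x ↦ S_x` is the canonical rack homomorphism into the conjugation quandle of its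
permutation group, which is therefore an embedding.
-/

open Quandles

theorem MulEquiv.injective_map_inv_mul_self {G : Type*} [Group G] {φ : G ≃* G}
    (hφ : ∀ g : G, φ g = g → g = 1) :
    Function.Injective fun x : G => φ x⁻¹ * x := by
  intro x y (hxy : φ x⁻¹ * x = φ y⁻¹ * y)
  have hfix : φ (y * x⁻¹) = y * x⁻¹ := by
    calc φ (y * x⁻¹) = φ y * (φ x⁻¹ * x) * x⁻¹ := by simp [mul_assoc]
      _ = φ y * (φ y⁻¹ * y) * x⁻¹ := by rw [hxy]
      _ = y * x⁻¹ := by simp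
  exact (mul_inv_eq_one.mp (hφ _ hfix)).symm

/-- Mathlib's racks act on the left, so `x ◃ y` is the paper's `y * x = S_x(y) = φ(y x⁻¹) x`. -/
abbrev AlexanderQuandle {G : Type*} [Group G] (_ : G ≃* G) : Type _ := G

namespace AlexanderQuandle

variable {G : Type*} [Group G] (φ : G ≃* G)

instance : Quandle (AlexanderQuandle φ) where
  act x y := φ (y * x⁻¹) * x
  invAct x y := φ.symm (y * x⁻¹) * x
  self_distrib := by
    intro x y z
    simp only [map_mul, map_inv]
    group
  left_inv x y := by simp
  right_inv x y := by simp
  fix := by simp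

theorem act_def (x y : AlexanderQuandle φ) : x ◃ y = φ (y * x⁻¹) * x := rfl

variable {φ}

theorem act_injective (hφ : ∀ g : G, φ g = g → g = 1) :
    Function.Injective (Shelf.act : AlexanderQuandle φ → AlexanderQuandle φ → AlexanderQuandle φ) :=
  fun x y hxy => φ.injective_map_inv_mul_self hφ (by simpa [act_def] using congrFun hxy (1 : G))

theorem toConj_injective (hφ : ∀ g : G, φ g = g → g = 1) :
    Function.Injective (Rack.toConj (AlexanderQuandle φ)) :=
  fun _ _ hxy => act_injective hφ (congrArg DFunLike.coe hxy)

end AlexanderQuandle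

/-- If `φ` is a fixed-point free automorphism of `G`, then `x ↦ S_x`, where
`S_x z = φ(z x⁻¹) x`, is injective on the generalized Alexander quandle `Alex(G, φ)`;
consequently `Alex(G, φ)` embeds into the conjugation quandle of a group. -/
theorem alexander_quandle_embeds (G : Type u) [Group G] (φ : G ≃* G)
    (hφ : ∀ g : G, φ g = g → g = 1) :
    Function.Injective (fun x : G => (fun z : G => φ (z * x⁻¹) * x)) ∧
    ∃ (H : Type u) (_ : Group H) (f : G → H), Function.Injective f ∧
      ∀ a b : G, f (φ (a * b⁻¹) * b) = f b * f a * (f b)⁻¹ :=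
  ⟨AlexanderQuandle.act_injective hφ, _, inferInstance, Rack.toConj (AlexanderQuandle φ),
    AlexanderQuandle.toConj_injective hφ, fun _ _ => (Rack.toConj (AlexanderQuandle φ)).map_act⟩
end

section
/- Let G be a group with a bi-ordering < and φ ∈ Aut(G). Then < is simultaneously a left order and a right order on the generalized Alexander quandle Alex(G, φ) if and only if for every g ∈ G with 1 < g one has 1 < φ(g) < g. -/
/-!
Right multiplication by `z` in `Alex(G, φ)` is `x ↦ φ(x z⁻¹) z`, so it preserves `<` exactly
when `φ` does, i.e. when `φ` maps positive elements to positive elements. Left multiplication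
by `z` is `x ↦ φ(z) φ(x)⁻¹ x`; for `x < y` and `g = y x⁻¹ > 1`, the inequality
`φ(x)⁻¹ x < φ(y)⁻¹ y` is a two-sided translate of `φ(g) < g`.
-/

section

variable {G : Type*} [Group G] {r : G → G → Prop}
variable {F : Type*} [FunLike F G G] [MonoidHomClass F G G]

def alexanderOp (φ : F) (x y : G) : G := φ (x * y⁻¹) * y

def AlexanderRightInvariant (r : G → G → Prop) (φ : F) : Prop :=
  ∀ x y z : G, r x y → r (alexanderOp φ x z) (alexanderOp φ y z)

def AlexanderLeftInvariant (r : G → G → Prop) (φ : F) : Prop :=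
  ∀ x y z : G, r x y → r (alexanderOp φ z x) (alexanderOp φ z y)

theorem one_rel_mul_inv_of_rel (hright : ∀ a b c : G, r a b → r (a * c) (b * c)) {a b : G}
    (h : r a b) : r 1 (b * a⁻¹) := by
  simpa using hright a b a⁻¹ h

theorem rel_of_one_rel_mul_inv (hright : ∀ a b c : G, r a b → r (a * c) (b * c)) {a b : G}
    (h : r 1 (b * a⁻¹)) : r a b := by
  simpa using hright 1 (b * a⁻¹) a h

theorem rel_map_of_rel (hright : ∀ a b c : G, r a b → r (a * c) (b * c)) {φ : F}
    (hpos : ∀ g, r 1 g → r 1 (φ g)) {a b : G} (h : r a b) : r (φ a) (φ b) := by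
  have := hpos _ (one_rel_mul_inv_of_rel hright h)
  rw [map_mul, map_inv] at this
  exact rel_of_one_rel_mul_inv hright this

theorem alexanderRightInvariant_iff (hright : ∀ a b c : G, r a b → r (a * c) (b * c)) (φ : F) :
    AlexanderRightInvariant r φ ↔ ∀ g, r 1 g → r 1 (φ g) := by
  constructor
  · intro h g hg
    simpa [alexanderOp] using h 1 g 1 hg
  · intro hpos x y z hxy
    exact hright _ _ z (rel_map_of_rel hright hpos (hright x y z⁻¹ hxy))

theorem alexanderLeftInvariant_iff (hleft : ∀ a b c : G, r a b → r (c * a) (c * b))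
    (hright : ∀ a b c : G, r a b → r (a * c) (b * c)) (φ : F) :
    AlexanderLeftInvariant r φ ↔ ∀ g, r 1 g → r (φ g) g := by
  constructor
  · intro h g hg
    simpa [alexanderOp] using h 1 g g hg
  · intro hlt x y z hxy
    have hg : r (φ (y * x⁻¹)) (y * x⁻¹) := hlt _ (one_rel_mul_inv_of_rel hright hxy)
    have key := hright _ _ x (hleft _ _ (φ z * (φ y)⁻¹) hg)
    convert key using 1 <;> simp only [alexanderOp, map_mul, map_inv] <;> group

end

theorem alexander_quandle_biorder_iff_general (G : Type*) [Group G] (r : G → G → Prop)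
    (hleft : ∀ a b c : G, r a b → r (c * a) (c * b))
    (hright : ∀ a b c : G, r a b → r (a * c) (b * c))
    (φ : G ≃* G) :
    ((∀ x y z : G, r x y → r (φ (x * z⁻¹) * z) (φ (y * z⁻¹) * z)) ∧
     (∀ x y z : G, r x y → r (φ (z * x⁻¹) * x) (φ (z * y⁻¹) * y))) ↔
    (∀ g : G, r 1 g → r 1 (φ g) ∧ r (φ g) g) := by
  change AlexanderRightInvariant r φ ∧ AlexanderLeftInvariant r φ ↔ _
  rw [alexanderRightInvariant_iff hright, alexanderLeftInvariant_iff hleft hright]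
  simp only [imp_and, forall_and]

/-- Let `<` (here `r`) be a bi-ordering of a group `G` and `φ ∈ Aut(G)`. Then `r` is both
a left and a right order on the generalized Alexander quandle `Alex(G, φ)`, whose
operation is `x * y = φ(x y⁻¹) y`, if and only if `1 < φ(g) < g` for all `g` with `1 < g`. -/
theorem alexander_quandle_biorder_iff (G : Type*) [Group G] (r : G → G → Prop)
    (hsto : IsStrictTotalOrder G r)
    (hleft : ∀ a b c : G, r a b → r (c * a) (c * b))
    (hright : ∀ a b c : G, r a b → r (a * c) (b * c))
    (φ : G ≃* G) :
    ((∀ x y z : G, r x y → r (φ (x * z⁻¹) * z) (φ (y * z⁻¹) * z)) ∧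
     (∀ x y z : G, r x y → r (φ (z * x⁻¹) * x) (φ (z * y⁻¹) * y))) ↔
    (∀ g : G, r 1 g → r 1 (φ g) ∧ r (φ g) g) :=
  alexander_quandle_biorder_iff_general G r hleft hright φ
end

section
/- The knot quandle of the trefoil knot is isomorphic to the Dehn quandle D(σ_1^{B_3}) of the conjugacy class of the generator σ_1 in the braid group B_3 = ⟨σ_1, σ_2 | σ_1σ_2σ_1 = σ_2σ_1σ_2⟩; moreover the restriction to this conjugacy class of the natural quotient B_3 → M_1 = ⟨a, b | aba = bab, (ab)^6 = 1⟩ (sending σ_1 ↦ a, σ_2 ↦ b) is an isomorphism of quandles D(σ_1^{B_3}) ≅ D(a^{M_1}). In particular, if x, y ∈ B_3 and x σ_1 x^{-1}, y σ_1 y^{-1} have equal images in M_1, then x σ_1 x^{-1} = y σ_1 y^{-1}. -/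
/-!
The quotient `B₃ → M₁` is onto, and its kernel is the normal closure of `(σ₁σ₂)⁶ = Δ⁴`
(with `Δ = σ₁σ₂σ₁`), which is central, so the kernel lies in the cyclic group it generates.
Two conjugates of `σ₁` with the same image in `M₁` therefore differ by some `(σ₁σ₂)^{6k}`; their
quotient has exponent sum `0`, while `(σ₁σ₂)^{6k}` has exponent sum `12k`, so `k = 0`.
-/

/-- The braid relation of the braid group `B₃ = ⟨σ₁, σ₂ | σ₁σ₂σ₁ = σ₂σ₁σ₂⟩`. -/
def braidRel : Set (FreeGroup (Fin 2)) :=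
  {FreeGroup.of 0 * FreeGroup.of 1 * FreeGroup.of 0 *
    (FreeGroup.of 1 * FreeGroup.of 0 * FreeGroup.of 1)⁻¹}

/-- The braid group `B₃`. -/
abbrev B3 : Type := PresentedGroup braidRel

/-- The mapping class group of the torus `M₁ = ⟨a, b | aba = bab, (ab)⁶ = 1⟩`. -/
abbrev M1 : Type :=
  PresentedGroup (braidRel ∪ {(FreeGroup.of 0 * FreeGroup.of 1) ^ 6})

section Conjugates

variable {G H A : Type*} [Group G] [Group H] [CommGroup A]

theorem Subgroup.normal_zpowers_of_mem_center {z : G} (hz : z ∈ Subgroup.center G) :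
    (Subgroup.zpowers z).Normal where
  conj_mem n hn g := by
    have hn : n ∈ Subgroup.center G := (Subgroup.zpowers_le.mpr hz) hn
    rwa [Subgroup.mem_center_iff.mp hn g, mul_inv_cancel_right]

theorem MonoidHom.map_conj_of_commGroup (e : G →* A) (g a : G) : e (g * a * g⁻¹) = e a := by
  rw [map_mul, map_mul, map_inv, mul_inv_cancel_comm]

theorem disjoint_ker_of_ker_le_zpowers (φ : G →* H) (e : G →* A) {z : G}
    (hker : φ.ker ≤ Subgroup.zpowers z) (hz : ¬IsOfFinOrder (e z)) : Disjoint φ.ker e.ker := by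
  rw [Subgroup.disjoint_def]
  intro x hxφ hxe
  obtain ⟨k, rfl⟩ := Subgroup.mem_zpowers_iff.mp (hker hxφ)
  have hk : e z ^ k = e z ^ (0 : ℤ) := by rw [← map_zpow, hxe, zpow_zero]
  rw [injective_zpow_iff_not_isOfFinOrder.mpr hz hk, zpow_zero]

theorem injOn_conjugates_of_disjoint_ker (φ : G →* H) (e : G →* A)
    (hker : Disjoint φ.ker e.ker) (a : G) :
    Set.InjOn φ {x | ∃ g, x = g * a * g⁻¹} := by
  rintro _ ⟨g, rfl⟩ _ ⟨h, rfl⟩ hφ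
  rw [← mul_inv_eq_one]
  refine Subgroup.disjoint_def.mp hker ?_ ?_
  · rw [MonoidHom.mem_ker, map_mul, map_inv, hφ, mul_inv_cancel]
  · rw [MonoidHom.mem_ker, map_mul, map_inv, e.map_conj_of_commGroup, e.map_conj_of_commGroup,
      mul_inv_cancel]

theorem mapsTo_conjugates (φ : G →* H) (a : G) :
    Set.MapsTo φ {x | ∃ g, x = g * a * g⁻¹} {y | ∃ h, y = h * φ a * h⁻¹} := by
  rintro _ ⟨g, rfl⟩
  exact ⟨φ g, by rw [map_mul, map_mul, map_inv]⟩

theorem surjOn_conjugates {φ : G →* H} (hφ : Function.Surjective φ) (a : G) :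
    Set.SurjOn φ {x | ∃ g, x = g * a * g⁻¹} {y | ∃ h, y = h * φ a * h⁻¹} := by
  rintro _ ⟨h, rfl⟩
  obtain ⟨g, rfl⟩ := hφ h
  exact ⟨g * a * g⁻¹, ⟨g, rfl⟩, by rw [map_mul, map_mul, map_inv]⟩

theorem bijOn_conjugates_of_ker_le_zpowers {φ : G →* H} (hφ : Function.Surjective φ)
    (e : G →* A) {z : G} (hker : φ.ker ≤ Subgroup.zpowers z) (hz : ¬IsOfFinOrder (e z))
    (a : G) :
    Set.BijOn φ {x | ∃ g, x = g * a * g⁻¹} {y | ∃ h, y = h * φ a * h⁻¹} :=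
  ⟨mapsTo_conjugates φ a,
    injOn_conjugates_of_disjoint_ker φ e (disjoint_ker_of_ker_le_zpowers φ e hker hz) a,
    surjOn_conjugates hφ a⟩

end Conjugates

namespace PresentedGroup

variable {α : Type*} {rels rels' : Set (FreeGroup α)}

theorem map_id_surjective (h : Set.MapsTo (MonoidHom.id _) rels rels') :
    Function.Surjective (PresentedGroup.map (MonoidHom.id _) h) :=
  QuotientGroup.map_surjective_of_surjective _ _ _ QuotientGroup.mk_surjective _

theorem ker_map_id_le (h : Set.MapsTo (MonoidHom.id _) rels rels')
    (K : Subgroup (PresentedGroup rels)) [K.Normal] (hK : ∀ r ∈ rels', mk rels r ∈ K) :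
    (PresentedGroup.map (MonoidHom.id _) h).ker ≤ K := by
  intro x hx
  obtain ⟨f, rfl⟩ := mk_surjective rels x
  have hf : f ∈ Subgroup.normalClosure rels' := mk_eq_one_iff.mp hx
  exact Subgroup.normalClosure_le_normal (N := K.comap (mk rels)) hK hf

end PresentedGroup

namespace B3

local notation "σ₁" => (PresentedGroup.of 0 : B3)
local notation "σ₂" => (PresentedGroup.of 1 : B3)

theorem braid_relation : σ₁ * σ₂ * σ₁ = σ₂ * σ₁ * σ₂ := by
  have h := PresentedGroup.one_of_mem (Set.mem_singleton _ : _ ∈ braidRel)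
  simp only [map_mul, map_inv] at h
  exact mul_inv_eq_one.mp h

theorem semiconjBy_garside_σ₁ : SemiconjBy (σ₁ * σ₂ * σ₁) σ₁ σ₂ := by
  unfold SemiconjBy
  conv_lhs => rw [braid_relation]
  group

theorem semiconjBy_garside_σ₂ : SemiconjBy (σ₁ * σ₂ * σ₁) σ₂ σ₁ := by
  unfold SemiconjBy
  conv_rhs => rw [braid_relation]
  group

theorem garside_sq_mem_center : (σ₁ * σ₂ * σ₁) ^ 2 ∈ Subgroup.center B3 := by
  rw [← Subgroup.centralizer_univ, ← Subgroup.coe_top, ← PresentedGroup.closure_range_of,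
    Subgroup.centralizer_closure, Subgroup.mem_centralizer_iff]
  simp only [Set.forall_mem_range, Fin.forall_fin_two, pow_two]
  exact ⟨(semiconjBy_garside_σ₂.mul_left semiconjBy_garside_σ₁).eq.symm,
    (semiconjBy_garside_σ₁.mul_left semiconjBy_garside_σ₂).eq.symm⟩

theorem pow_six_eq_garside_pow_four : (σ₁ * σ₂) ^ 6 = ((σ₁ * σ₂ * σ₁) ^ 2) ^ 2 := by
  have h : (σ₁ * σ₂) ^ 3 = (σ₁ * σ₂ * σ₁) ^ 2 := by
    calc (σ₁ * σ₂) ^ 3 = σ₁ * σ₂ * σ₁ * (σ₂ * σ₁ * σ₂) := by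
          simp only [pow_succ, pow_zero, one_mul, mul_assoc]
      _ = (σ₁ * σ₂ * σ₁) ^ 2 := by rw [← braid_relation, pow_two]
  rw [← h, ← pow_mul]

theorem pow_six_mem_center : (σ₁ * σ₂) ^ 6 ∈ Subgroup.center B3 := by
  rw [pow_six_eq_garside_pow_four]
  exact Subgroup.pow_mem _ garside_sq_mem_center 2

def exponentSum : B3 →* Multiplicative ℤ :=
  PresentedGroup.toGroup (f := fun _ => Multiplicative.ofAdd 1) (by
    rintro _ rfl
    simp only [map_mul, map_inv, FreeGroup.lift_apply_of]
    group)

theorem exponentSum_of (i : Fin 2) : exponentSum (PresentedGroup.of i) = Multiplicative.ofAdd 1 :=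
  PresentedGroup.toGroup.of _

theorem not_isOfFinOrder_exponentSum_pow_six : ¬IsOfFinOrder (exponentSum ((σ₁ * σ₂) ^ 6)) := by
  refine not_isOfFinOrder_of_isMulTorsionFree ?_
  rw [map_pow, map_mul, exponentSum_of, exponentSum_of, ← ofAdd_add, ← ofAdd_nsmul]
  decide

def toM1 : B3 →* M1 :=
  PresentedGroup.map (MonoidHom.id _) fun _ hr => Or.inl hr

theorem ker_toM1_le_zpowers : toM1.ker ≤ Subgroup.zpowers ((σ₁ * σ₂) ^ 6) := by
  have := Subgroup.normal_zpowers_of_mem_center pow_six_mem_center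
  refine PresentedGroup.ker_map_id_le _ _ ?_
  rintro r (hr | rfl)
  · rw [PresentedGroup.one_of_mem hr]
    exact one_mem _
  · exact Subgroup.mem_zpowers _

end B3

/-- The knot quandle of the trefoil is the Dehn quandle `D(σ₁^{B₃})` (by primality of the
trefoil, whose knot group is `B₃`), and the natural quotient `B₃ → M₁`, `σ₁ ↦ a`,
`σ₂ ↦ b`, restricts to a bijection (hence, being a restriction of a group homomorphism to
conjugacy classes, a quandle isomorphism) from `D(σ₁^{B₃})` onto the Dehn quandle
`D(a^{M₁})` of the torus. In particular it is injective on the conjugacy class of `σ₁`. -/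
theorem trefoil_quandle_iso_dehn_quandle_torus :
    ∃ π : B3 →* M1,
      (∀ i : Fin 2, π (PresentedGroup.of i) = PresentedGroup.of i) ∧
      Set.BijOn π
        {x : B3 | ∃ g : B3, x = g * PresentedGroup.of 0 * g⁻¹}
        {x : M1 | ∃ g : M1, x = g * PresentedGroup.of 0 * g⁻¹} :=
  ⟨B3.toM1, fun _ => rfl,
    bijOn_conjugates_of_ker_le_zpowers (PresentedGroup.map_id_surjective _) B3.exponentSum
      B3.ker_toM1_le_zpowers B3.not_isOfFinOrder_exponentSum_pow_six _⟩
end
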